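/- arXiv:1406.7079 — 3 statements merged into one kernel-verified Lean document; each statement's English description precedes it below -/
import Mathlib

section
/- For every bounded open convex subset Ω of ℝⁿ (n ≥ 1), the Hilbert distance d_Ω is a metric on Ω: it is nonnegative, d_Ω(x,y) = 0 if and only if x = y, it is symmetric, and it satisfies the triangle inequality d_Ω(x,z) ≤ d_Ω(x,y) + d_Ω(y,z) for all x, y, z ∈ Ω. -/
open Set MeasureTheory
open scoped ENNReal Classical

noncomputable section

/-- The set of parameters `t` for which `x + t • (y - x)` lies in the closure of `Ω`. -/
def chordParams {n : ℕ} (Ω : Set (EuclideanSpace ℝ (Fin n)))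
    (x y : EuclideanSpace ℝ (Fin n)) : Set ℝ :=
  {t : ℝ | x + t • (y - x) ∈ closure Ω}

/-- The Hilbert distance on a bounded open convex set `Ω`: for `x ≠ y` the line
through `x` and `y` meets `∂Ω` at `p = x + a • (y - x)` and `q = x + b • (y - x)`
where `a = sInf (chordParams Ω x y) ≤ 0` and `b = sSup (chordParams Ω x y) ≥ 1`,
so that `p, x, y, q` occur in this order on the line, and
`d_Ω(x,y) = (1/2) log (|p-y||q-x| / (|p-x||q-y|))`. -/
def hilbertDist {n : ℕ} (Ω : Set (EuclideanSpace ℝ (Fin n)))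
    (x y : EuclideanSpace ℝ (Fin n)) : ℝ :=
  if x = y then 0
  else
    let p := x + sInf (chordParams Ω x y) • (y - x)
    let q := x + sSup (chordParams Ω x y) • (y - x)
    (1 / 2) * Real.log ((dist p y * dist q x) / (dist p x * dist q y))

/-!
`d_Ω` is the symmetrisation of the Funk distance `F(x, y) = log (|q - x| / |q - y|)`, where `q`
is the point where the ray from `x` through `y` leaves `Ω`. For a supporting hyperplane
`{f = c}` of `Ω`, the affine function `c - f` is positive on `Ω`, so
`log ((c - f x) / (c - f y))` is additive along any three points; it is at most `F(x, y)`,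
with equality when the hyperplane passes through `q`. Taking the hyperplane at the exit point
of the ray from `x` through `z` gives `F(x, z) ≤ F(x, y) + F(y, z)`.
-/

open AffineMap

theorem csSup_notMem_interior {α : Type*} [ConditionallyCompleteLinearOrder α]
    [TopologicalSpace α] [OrderTopology α] [DenselyOrdered α] [NoMaxOrder α] {s : Set α}
    (hs : BddAbove s) : sSup s ∉ interior s := fun h ↦
  let ⟨_, hlt, hmem⟩ := Filter.Eventually.exists_gt (mem_interior_iff_mem_nhds.1 h)
  (le_csSup hs hmem).not_gt hlt

section

variable {n : ℕ} {Ω : Set (EuclideanSpace ℝ (Fin n))} {x y z : EuclideanSpace ℝ (Fin n)}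

theorem chordParams_eq_preimage (Ω : Set (EuclideanSpace ℝ (Fin n)))
    (x y : EuclideanSpace ℝ (Fin n)) : chordParams Ω x y = lineMap x y ⁻¹' closure Ω := by
  ext t
  simp [chordParams, lineMap_apply_module', add_comm]

theorem isClosed_chordParams : IsClosed (chordParams Ω x y) := by
  rw [chordParams_eq_preimage]
  exact isClosed_closure.preimage lineMap_continuous

theorem zero_mem_chordParams (hx : x ∈ Ω) : (0 : ℝ) ∈ chordParams Ω x y := by
  simpa [chordParams_eq_preimage] using subset_closure hx

theorem bddAbove_chordParams (hbd : Bornology.IsBounded Ω) (hxy : x ≠ y) :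
    BddAbove (chordParams Ω x y) := by
  obtain ⟨C, hC⟩ := Metric.isBounded_iff.1 hbd.closure
  have hd : 0 < dist x y := dist_pos.2 hxy
  refine (Metric.isBounded_iff.2 ⟨C / dist x y, fun s hs t ht ↦ ?_⟩).bddAbove
  rw [chordParams_eq_preimage] at hs ht
  rw [le_div_iff₀ hd, ← dist_lineMap_lineMap]
  exact hC hs ht

theorem preimage_subset_interior_chordParams (hop : IsOpen Ω) :
    lineMap x y ⁻¹' Ω ⊆ interior (chordParams Ω x y) :=
  interior_maximal (by rw [chordParams_eq_preimage]; exact preimage_mono subset_closure)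
    (hop.preimage lineMap_continuous)

theorem one_lt_sSup_chordParams (hbd : Bornology.IsBounded Ω) (hop : IsOpen Ω) (hy : y ∈ Ω)
    (hxy : x ≠ y) : 1 < sSup (chordParams Ω x y) := by
  have hbdd := bddAbove_chordParams hbd hxy
  have h1 : (1 : ℝ) ∈ interior (chordParams Ω x y) :=
    preimage_subset_interior_chordParams hop (by simpa using hy)
  exact (le_csSup hbdd (interior_subset h1)).lt_of_ne
    fun h ↦ csSup_notMem_interior hbdd (h ▸ h1)

def funkExit (Ω : Set (EuclideanSpace ℝ (Fin n))) (x y : EuclideanSpace ℝ (Fin n)) :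
    EuclideanSpace ℝ (Fin n) :=
  lineMap x y (sSup (chordParams Ω x y))

theorem apply_funkExit (f : StrongDual ℝ (EuclideanSpace ℝ (Fin n))) :
    f (funkExit Ω x y) = f x + sSup (chordParams Ω x y) * (f y - f x) := by
  rw [funkExit, lineMap_apply_module', map_add, map_smul, map_sub, smul_eq_mul, add_comm]

theorem funkExit_mem_closure (hbd : Bornology.IsBounded Ω) (hx : x ∈ Ω) (hxy : x ≠ y) :
    funkExit Ω x y ∈ closure Ω :=
  (chordParams_eq_preimage Ω x y).subset <|
    isClosed_chordParams.csSup_mem ⟨0, zero_mem_chordParams hx⟩ (bddAbove_chordParams hbd hxy)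

theorem funkExit_notMem (hbd : Bornology.IsBounded Ω) (hop : IsOpen Ω) (hxy : x ≠ y) :
    funkExit Ω x y ∉ Ω := fun h ↦
  csSup_notMem_interior (bddAbove_chordParams hbd hxy) (preimage_subset_interior_chordParams hop h)

theorem lineMap_sInf_chordParams_eq_funkExit (hbd : Bornology.IsBounded Ω) (hy : y ∈ Ω) (hxy : x ≠ y) :
    lineMap x y (sInf (chordParams Ω x y)) = funkExit Ω y x := by
  have himage : (fun t : ℝ ↦ 1 - t) '' chordParams Ω y x = chordParams Ω x y := by
    rw [image_eq_preimage_of_inverse (fun t ↦ sub_sub_cancel 1 t) (fun t ↦ sub_sub_cancel 1 t)]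
    ext t
    simp [chordParams_eq_preimage, lineMap_apply_one_sub]
  have hsInf : 1 - sSup (chordParams Ω y x) = sInf (chordParams Ω x y) := by
    rw [← himage]
    exact Antitone.map_csSup_of_continuousAt (continuous_sub_left 1).continuousAt
      (fun _ _ h ↦ sub_le_sub_left h 1) ⟨0, zero_mem_chordParams hy⟩
      (bddAbove_chordParams hbd hxy.symm)
  rw [funkExit, ← hsInf, lineMap_apply_one_sub]

theorem dist_funkExit_div (hbd : Bornology.IsBounded Ω) (hop : IsOpen Ω) (hy : y ∈ Ω)
    (hxy : x ≠ y) :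
    dist (funkExit Ω x y) x / dist (funkExit Ω x y) y =
      sSup (chordParams Ω x y) / (sSup (chordParams Ω x y) - 1) := by
  have hb := one_lt_sSup_chordParams hbd hop hy hxy
  rw [funkExit, dist_lineMap_left, dist_lineMap_right, Real.norm_of_nonneg (by linarith),
    Real.norm_of_nonpos (by linarith), neg_sub, mul_div_mul_right _ _ (dist_pos.2 hxy).ne']

/-- For `x = y` the exit point is `x` itself and the junk value `0 / 0 = 0` makes this vanish. -/
def funkDist (Ω : Set (EuclideanSpace ℝ (Fin n))) (x y : EuclideanSpace ℝ (Fin n)) : ℝ :=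
  Real.log (dist (funkExit Ω x y) x / dist (funkExit Ω x y) y)

@[simp]
theorem funkDist_self : funkDist Ω x x = 0 := by
  simp [funkDist, funkExit]

theorem funkDist_pos (hbd : Bornology.IsBounded Ω) (hop : IsOpen Ω) (hy : y ∈ Ω)
    (hxy : x ≠ y) : 0 < funkDist Ω x y := by
  have hb := one_lt_sSup_chordParams hbd hop hy hxy
  rw [funkDist, dist_funkExit_div hbd hop hy hxy]
  exact Real.log_pos ((one_lt_div (by linarith)).2 (by linarith))

theorem funkDist_nonneg (hbd : Bornology.IsBounded Ω) (hop : IsOpen Ω) (hy : y ∈ Ω) :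
    0 ≤ funkDist Ω x y := by
  rcases eq_or_ne x y with rfl | hxy
  · rw [funkDist_self]
  · exact (funkDist_pos hbd hop hy hxy).le

theorem hilbertDist_eq_funkDist (hbd : Bornology.IsBounded Ω) (hop : IsOpen Ω) (hx : x ∈ Ω)
    (hy : y ∈ Ω) : hilbertDist Ω x y = (funkDist Ω x y + funkDist Ω y x) / 2 := by
  rcases eq_or_ne x y with rfl | hxy
  · simp [hilbertDist]
  have hp : x + sInf (chordParams Ω x y) • (y - x) = funkExit Ω y x := by
    rw [← lineMap_sInf_chordParams_eq_funkExit hbd hy hxy, lineMap_apply_module', add_comm]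
  have hq : x + sSup (chordParams Ω x y) • (y - x) = funkExit Ω x y := by
    rw [funkExit, lineMap_apply_module', add_comm]
  have hpΩ := funkExit_notMem hbd hop hxy.symm
  have hqΩ := funkExit_notMem hbd hop hxy
  have hdist : ∀ {u w}, u ∈ Ω → w ∉ Ω → dist w u ≠ 0 := fun hu hw ↦
    dist_ne_zero.2 (ne_of_mem_of_not_mem hu hw).symm
  rw [hilbertDist, if_neg hxy]
  dsimp only
  rw [hp, hq, mul_div_mul_comm,
    Real.log_mul (div_ne_zero (hdist hy hpΩ) (hdist hx hpΩ))
      (div_ne_zero (hdist hx hqΩ) (hdist hy hqΩ)), funkDist, funkDist]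
  ring

theorem log_div_le_funkDist (hbd : Bornology.IsBounded Ω) (hop : IsOpen Ω) (hx : x ∈ Ω)
    (hy : y ∈ Ω) {f : StrongDual ℝ (EuclideanSpace ℝ (Fin n))} {c : ℝ}
    (hf : ∀ w ∈ Ω, f w < c) : Real.log ((c - f x) / (c - f y)) ≤ funkDist Ω x y := by
  have hfx := sub_pos.2 (hf x hx)
  have hfy := sub_pos.2 (hf y hy)
  rcases eq_or_ne x y with rfl | hxy
  · simp [div_self hfx.ne']
  have hb := one_lt_sSup_chordParams hbd hop hy hxy
  have hexit : f (funkExit Ω x y) ≤ c :=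
    closure_minimal (fun w hw ↦ (hf w hw).le) (isClosed_le f.continuous continuous_const)
      (funkExit_mem_closure hbd hx hxy)
  rw [apply_funkExit] at hexit
  rw [funkDist, dist_funkExit_div hbd hop hy hxy]
  refine Real.log_le_log (div_pos hfx hfy) ((div_le_div_iff₀ hfy (by linarith)).2 ?_)
  linarith

theorem funkDist_eq_log_div (hbd : Bornology.IsBounded Ω) (hop : IsOpen Ω) (hy : y ∈ Ω)
    (hxy : x ≠ y) (f : StrongDual ℝ (EuclideanSpace ℝ (Fin n)))
    (hfy : f y < f (funkExit Ω x y)) :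
    funkDist Ω x y = Real.log ((f (funkExit Ω x y) - f x) / (f (funkExit Ω x y) - f y)) := by
  have hb := one_lt_sSup_chordParams hbd hop hy hxy
  rw [funkDist, dist_funkExit_div hbd hop hy hxy]
  rw [apply_funkExit] at hfy ⊢
  set b := sSup (chordParams Ω x y)
  have hslope : f y - f x ≠ 0 := by
    intro h
    rw [h] at hfy
    linarith
  rw [add_sub_cancel_left, show f x + b * (f y - f x) - f y = (b - 1) * (f y - f x) by ring,
    mul_div_mul_right _ _ hslope]

theorem funkDist_triangle (hbd : Bornology.IsBounded Ω) (hop : IsOpen Ω) (hconv : Convex ℝ Ω)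
    (hx : x ∈ Ω) (hy : y ∈ Ω) (hz : z ∈ Ω) :
    funkDist Ω x z ≤ funkDist Ω x y + funkDist Ω y z := by
  rcases eq_or_ne x z with rfl | hxz
  · rw [funkDist_self]
    exact add_nonneg (funkDist_nonneg hbd hop hy) (funkDist_nonneg hbd hop hx)
  obtain ⟨f, hf⟩ := geometric_hahn_banach_open_point hconv hop (funkExit_notMem hbd hop hxz)
  set c := f (funkExit Ω x z)
  have hne : ∀ w ∈ Ω, c - f w ≠ 0 := fun w hw ↦ (sub_pos.2 (hf w hw)).ne'
  calc funkDist Ω x z = Real.log ((c - f x) / (c - f z)) :=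
        funkDist_eq_log_div hbd hop hz hxz f (hf z hz)
    _ = Real.log ((c - f x) / (c - f y)) + Real.log ((c - f y) / (c - f z)) := by
        rw [← Real.log_mul (div_ne_zero (hne x hx) (hne y hy))
          (div_ne_zero (hne y hy) (hne z hz)), div_mul_div_cancel₀ (hne y hy)]
    _ ≤ funkDist Ω x y + funkDist Ω y z :=
        add_le_add (log_div_le_funkDist hbd hop hx hy hf) (log_div_le_funkDist hbd hop hy hz hf)

end

theorem hilbertDist_is_metric_general {n : ℕ}
    (Ω : Set (EuclideanSpace ℝ (Fin n)))
    (hbd : Bornology.IsBounded Ω) (hop : IsOpen Ω) (hconv : Convex ℝ Ω) :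
    ∀ x ∈ Ω, ∀ y ∈ Ω, ∀ z ∈ Ω,
      0 ≤ hilbertDist Ω x y ∧
      (hilbertDist Ω x y = 0 ↔ x = y) ∧
      hilbertDist Ω x y = hilbertDist Ω y x ∧
      hilbertDist Ω x z ≤ hilbertDist Ω x y + hilbertDist Ω y z := by
  intro x hx y hy z hz
  simp only [hilbertDist_eq_funkDist hbd hop, hx, hy, hz]
  have hFxy := funkDist_nonneg hbd hop hy (x := x)
  have hFyx := funkDist_nonneg hbd hop hx (x := y)
  refine ⟨by linarith, ⟨fun h ↦ ?_, by rintro rfl; simp⟩, by ring, ?_⟩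
  · by_contra hxy
    linarith [funkDist_pos hbd hop hy hxy]
  · linarith [funkDist_triangle hbd hop hconv hx hy hz, funkDist_triangle hbd hop hconv hz hy hx]

/-- For every bounded open convex subset `Ω` of `ℝⁿ` (`n ≥ 1`), the
Hilbert distance is a metric on `Ω`. -/
theorem hilbertDist_is_metric {n : ℕ} (hn : 1 ≤ n)
    (Ω : Set (EuclideanSpace ℝ (Fin n)))
    (hbd : Bornology.IsBounded Ω) (hop : IsOpen Ω) (hconv : Convex ℝ Ω) :
    ∀ x ∈ Ω, ∀ y ∈ Ω, ∀ z ∈ Ω,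
      0 ≤ hilbertDist Ω x y ∧
      (hilbertDist Ω x y = 0 ↔ x = y) ∧
      hilbertDist Ω x y = hilbertDist Ω y x ∧
      hilbertDist Ω x z ≤ hilbertDist Ω x y + hilbertDist Ω y z :=
  hilbertDist_is_metric_general Ω hbd hop hconv
end
end

section
/- The Hilbert metric of the open unit ball is the hyperbolic metric in the Cayley–Klein–Beltrami model: if Ω is the open unit ball of the Euclidean space ℝⁿ (n ≥ 1) and x, y ∈ Ω, then cosh(d_Ω(x,y)) = (1 − ⟨x,y⟩) / √((1 − ‖x‖²)·(1 − ‖y‖²)), where ⟨·,·⟩ and ‖·‖ are the Euclidean inner product and norm. -/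
open Set MeasureTheory
open scoped ENNReal Classical

noncomputable section

/-!
Along the chord `t ↦ x + t • (y - x)` of the unit ball, `‖x + t • (y - x)‖² - 1` is a quadratic
`‖y - x‖² (t - a)(t - b)` whose roots `a < 0 < 1 < b` are the parameters of the boundary points.
The Hilbert distance is then `½ log (N / D)` with `N = (1 - a) b`, `D = -a (b - 1)`, and
`cosh (½ log (N / D)) = (N + D) / (2 √(N D))`. Evaluating the quadratic at `t = 0` and `t = 1`
gives `‖y - x‖⁴ N D = (1 - ‖x‖²)(1 - ‖y‖²)` and `‖y - x‖² (N + D) = 2 (1 - ⟪x, y⟫)`.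
-/

open Real

theorem cosh_half_log_div {N D : ℝ} (hN : 0 < N) (hD : 0 < D) :
    cosh (1 / 2 * log (N / D)) = (N + D) / (2 * √(N * D)) := by
  have hND : 0 < N / D := div_pos hN hD
  rw [one_div_mul_eq_div, ← log_sqrt hND.le, cosh_log (sqrt_pos.2 hND), sqrt_div' _ hD.le,
    sqrt_mul hN.le, inv_div]
  have hsN := sq_sqrt hN.le
  have hsD := sq_sqrt hD.le
  have : 0 < √N := sqrt_pos.2 hN
  have : 0 < √D := sqrt_pos.2 hD
  field_simp
  rw [hsN, hsD]

theorem exists_quadratic_eq_mul_sub_mul_sub {A B C : ℝ} (hA : 0 < A) (hC : C < 0) :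
    ∃ a b, a < 0 ∧ 0 < b ∧ ∀ t, A * t ^ 2 + B * t + C = A * ((t - a) * (t - b)) := by
  have hdisc : 0 < B ^ 2 - 4 * A * C := by nlinarith
  set s := √(B ^ 2 - 4 * A * C)
  have hs : s ^ 2 = B ^ 2 - 4 * A * C := sq_sqrt hdisc.le
  have hBs : |B| < s := by
    rw [← sqrt_sq_eq_abs]; exact sqrt_lt_sqrt (sq_nonneg B) (by nlinarith)
  refine ⟨(-B - s) / (2 * A), (-B + s) / (2 * A), ?_, ?_, fun t => ?_⟩
  · exact div_neg_of_neg_of_pos (by linarith [neg_abs_le B]) (by positivity)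
  · exact div_pos (by linarith [le_abs_self B]) (by positivity)
  · field_simp
    linear_combination hs

theorem exists_norm_add_smul_sq_sub_one_eq {E : Type*} [NormedAddCommGroup E]
    [InnerProductSpace ℝ E] {x v : E} (hx : ‖x‖ < 1) (hv : v ≠ 0) :
    ∃ a b, a < 0 ∧ 0 < b ∧ ∀ t : ℝ, ‖x + t • v‖ ^ 2 - 1 = ‖v‖ ^ 2 * ((t - a) * (t - b)) := by
  obtain ⟨a, b, ha, hb, hab⟩ := exists_quadratic_eq_mul_sub_mul_sub (B := 2 * inner ℝ x v)
    (pow_pos (norm_pos_iff.2 hv) 2) (by nlinarith [norm_nonneg x] : ‖x‖ ^ 2 - 1 < 0)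
  refine ⟨a, b, ha, hb, fun t => ?_⟩
  rw [← hab, norm_add_sq_real, inner_smul_right, norm_smul, norm_eq_abs, mul_pow, sq_abs]
  ring

section HilbertDist

variable {n : ℕ}

theorem hilbertDist_self (Ω : Set (EuclideanSpace ℝ (Fin n))) (x : EuclideanSpace ℝ (Fin n)) :
    hilbertDist Ω x x = 0 :=
  if_pos rfl

theorem hilbertDist_eq_of_chordParams_eq_Icc {Ω : Set (EuclideanSpace ℝ (Fin n))}
    {x y : EuclideanSpace ℝ (Fin n)} {a b : ℝ} (hxy : x ≠ y) (hΩ : chordParams Ω x y = Icc a b)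
    (ha : a < 0) (hb : 1 < b) :
    hilbertDist Ω x y = 1 / 2 * log ((1 - a) * b / (-a * (b - 1))) := by
  have hab : a ≤ b := by linarith
  have dist_x (s : ℝ) : dist (x + s • (y - x)) x = |s| * ‖y - x‖ := by
    rw [dist_eq_norm, add_sub_cancel_left, norm_smul, norm_eq_abs]
  have dist_y (s : ℝ) : dist (x + s • (y - x)) y = |s - 1| * ‖y - x‖ := by
    rw [dist_eq_norm, show x + s • (y - x) - y = (s - 1) • (y - x) by module, norm_smul,
      norm_eq_abs]
  have hv : 0 < ‖y - x‖ := norm_pos_iff.2 (sub_ne_zero.2 hxy.symm)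
  simp only [hilbertDist, if_neg hxy, hΩ, csInf_Icc hab, csSup_Icc hab, dist_x, dist_y]
  rw [abs_of_neg (by linarith : a - 1 < 0), abs_of_pos (by linarith : 0 < b), abs_of_neg ha,
    abs_of_pos (by linarith : 0 < b - 1)]
  congr 2
  field_simp
  ring

theorem chordParams_unit_ball_eq_Icc {x y : EuclideanSpace ℝ (Fin n)} {a b : ℝ} (hab : a ≤ b)
    (hxy : x ≠ y)
    (hf : ∀ t : ℝ, ‖x + t • (y - x)‖ ^ 2 - 1 = ‖y - x‖ ^ 2 * ((t - a) * (t - b))) :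
    chordParams (Metric.ball 0 1) x y = Icc a b := by
  have hv : 0 < ‖y - x‖ ^ 2 := pow_pos (norm_pos_iff.2 (sub_ne_zero.2 hxy.symm)) 2
  ext t
  rw [chordParams, closure_ball 0 one_ne_zero, mem_ofPred_eq, mem_closedBall_zero_iff,
    ← sq_le_one_iff₀ (norm_nonneg _), ← sub_nonpos, hf, ← neg_nonneg, ← mul_neg,
    mul_nonneg_iff_of_pos_left hv, neg_nonneg, sub_mul_sub_nonpos_iff t hab, mem_Icc]

end HilbertDist

theorem hilbertDist_unit_ball_cayley_klein_general {n : ℕ}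
    (x y : EuclideanSpace ℝ (Fin n))
    (hx : x ∈ Metric.ball (0 : EuclideanSpace ℝ (Fin n)) 1)
    (hy : y ∈ Metric.ball (0 : EuclideanSpace ℝ (Fin n)) 1) :
    Real.cosh (hilbertDist (Metric.ball (0 : EuclideanSpace ℝ (Fin n)) 1) x y) =
      (1 - (inner ℝ x y : ℝ)) / Real.sqrt ((1 - ‖x‖ ^ 2) * (1 - ‖y‖ ^ 2)) := by
  rw [mem_ball_zero_iff] at hx hy
  rcases eq_or_ne x y with rfl | hxy
  · have hx₁ : 0 < 1 - ‖x‖ ^ 2 := by nlinarith [norm_nonneg x]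
    rw [hilbertDist_self, cosh_zero, real_inner_self_eq_norm_sq, sqrt_mul_self hx₁.le,
      div_self hx₁.ne']
  obtain ⟨a, b, ha, hb, hf⟩ := exists_norm_add_smul_sq_sub_one_eq hx (sub_ne_zero.2 hxy.symm)
  have hv₀ : 0 < ‖y - x‖ := norm_pos_iff.2 (sub_ne_zero.2 hxy.symm)
  have hv : 0 < ‖y - x‖ ^ 2 := pow_pos hv₀ 2
  have hx' : ‖x‖ ^ 2 - 1 = ‖y - x‖ ^ 2 * (a * b) := by simpa using hf 0
  have hy' : ‖y‖ ^ 2 - 1 = ‖y - x‖ ^ 2 * ((1 - a) * (1 - b)) := by simpa using hf 1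
  have hb₁ : 1 < b := by nlinarith [norm_nonneg y, mul_pos hv (by linarith : 0 < 1 - a)]
  have hchord := chordParams_unit_ball_eq_Icc (ha.trans hb).le hxy hf
  rw [hilbertDist_eq_of_chordParams_eq_Icc hxy hchord ha hb₁,
    cosh_half_log_div (by nlinarith) (by nlinarith)]
  have hsqrt :
      √((1 - ‖x‖ ^ 2) * (1 - ‖y‖ ^ 2)) = ‖y - x‖ ^ 2 * √((1 - a) * b * (-a * (b - 1))) := by
    rw [← sqrt_sq hv.le, ← sqrt_mul (sq_nonneg _)]
    congr 1
    linear_combination (‖y‖ ^ 2 - 1) * hx' + ‖y - x‖ ^ 2 * (a * b) * hy'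
  have hinner : 1 - inner ℝ x y = ‖y - x‖ ^ 2 * ((1 - a) * b + -a * (b - 1)) / 2 := by
    linear_combination -(hx' + hy' + norm_sub_sq_real y x) / 2 + real_inner_comm x y
  rw [hsqrt, hinner]
  field_simp

/-- The Hilbert metric of the open unit ball is the hyperbolic metric
in the Cayley–Klein–Beltrami model:
`cosh (d_Ω(x,y)) = (1 - ⟨x,y⟩) / √((1 - ‖x‖²)(1 - ‖y‖²))`. -/
theorem hilbertDist_unit_ball_cayley_klein {n : ℕ} (hn : 1 ≤ n)
    (x y : EuclideanSpace ℝ (Fin n))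
    (hx : x ∈ Metric.ball (0 : EuclideanSpace ℝ (Fin n)) 1)
    (hy : y ∈ Metric.ball (0 : EuclideanSpace ℝ (Fin n)) 1) :
    Real.cosh (hilbertDist (Metric.ball (0 : EuclideanSpace ℝ (Fin n)) 1) x y) =
      (1 - (inner ℝ x y : ℝ)) / Real.sqrt ((1 - ‖x‖ ^ 2) * (1 - ‖y‖ ^ 2)) :=
  hilbertDist_unit_ball_cayley_klein_general x y hx hy
end
end

section
/- The length metric of the Hilbert–Finsler norm is the Hilbert metric: for every bounded open convex Ω ⊆ ℝⁿ and all x, y ∈ Ω, d_Ω(x,y) equals the infimum, over all continuously differentiable paths γ : [0,1] → Ω with γ(0) = x and γ(1) = y, of the Finsler length ∫₀¹ ‖γ'(t)‖_{γ(t)}^Ω dt. -/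
/-!
Along the chord through `x` and `y`, with endpoints `p = x + a • (y - x)` and
`q = x + b • (y - x)`, the Finsler norm of the velocity of the straight segment at
`x + t • (y - x)` is `((b - t)⁻¹ + (t - a)⁻¹) / 2`; its integral over `[0, 1]` is
`(log (b / (b - 1)) - log (a / (a - 1))) / 2 = d_Ω(x, y)`, so the segment realises the distance.

Conversely, the Finsler norm is the average of the Funk norms `F_z(±v)`, where `F_z` is the gauge
of `Ω - z`. If `f < f q` and `g < g p` on `Ω` (Hahn–Banach), then `F_z(v) ≥ f v / (f q - f z)` and
`F_z(-v) ≥ -g v / (g p - g z)`. Along any path `γ` these lower bounds are the derivatives of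
`-log (f q - f ∘ γ)` and `log (g p - g ∘ γ)`, so the length of `γ` is at least the increment of
their average; since `f` and `g` are affine on the chord, that increment is again `d_Ω(x, y)`.
-/

open Set MeasureTheory
open scoped ENNReal Classical

noncomputable section

/-- The parameter at which the ray from `x` in direction `v` exits `Ω`:
`x + (rayParam Ω x v) • v` is the point where this ray meets `∂Ω`. -/
def rayParam {n : ℕ} (Ω : Set (EuclideanSpace ℝ (Fin n)))
    (x v : EuclideanSpace ℝ (Fin n)) : ℝ :=
  sSup {t : ℝ | 0 ≤ t ∧ x + t • v ∈ closure Ω}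

/-- The Hilbert--Finsler norm `‖v‖ₓ^Ω = (1/2)(1/|x-p⁻| + 1/|x-p⁺|)|v|`, where
`p⁺` (resp. `p⁻`) is the point where the ray from `x` in the direction `v`
(resp. `-v`) meets `∂Ω`. -/
def finslerNorm {n : ℕ} (Ω : Set (EuclideanSpace ℝ (Fin n)))
    (x v : EuclideanSpace ℝ (Fin n)) : ℝ :=
  if v = 0 then 0
  else
    let pPlus := x + rayParam Ω x v • v
    let pMinus := x + rayParam Ω x (-v) • (-v)
    (1 / 2) * (1 / dist x pMinus + 1 / dist x pPlus) * ‖v‖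

open Filter Topology

section Funk

lemma preimage_add_left_mem_nhds_zero {G : Type*} [TopologicalSpace G] [AddZeroClass G]
    [ContinuousAdd G] {Ω : Set G} {z : G} (hop : IsOpen Ω) (hz : z ∈ Ω) :
    (z + ·) ⁻¹' Ω ∈ 𝓝 0 :=
  (hop.preimage (continuous_const_add z)).mem_nhds (by simpa using hz)

variable {E : Type*} [NormedAddCommGroup E] [NormedSpace ℝ E]

/-- The Funk norm of `v` at `z`, that is `1 / rayParam Ω z v`; `finslerNorm` is its
symmetrization. -/
def funkNorm (Ω : Set E) (z v : E) : ℝ := gauge ((z + ·) ⁻¹' Ω) v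

variable {Ω : Set E} {z v : E}

lemma funkNorm_nonneg (Ω : Set E) (z v : E) : 0 ≤ funkNorm Ω z v := gauge_nonneg v

lemma funkNorm_smul {t : ℝ} (ht : 0 ≤ t) (v : E) :
    funkNorm Ω z (t • v) = t * funkNorm Ω z v :=
  gauge_smul_of_nonneg ht v

lemma funkNorm_lt_iff (hop : IsOpen Ω) (hconv : Convex ℝ Ω) (hz : z ∈ Ω) {r : ℝ} (hr : 0 < r) :
    funkNorm Ω z v < r ↔ z + r⁻¹ • v ∈ Ω := by
  have h := gauge_lt_one_iff_mem_interior (hconv.translate_preimage_right z)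
    (preimage_add_left_mem_nhds_zero hop hz) (x := r⁻¹ • v)
  rwa [(hop.preimage (continuous_const_add z)).interior_eq, ← funkNorm,
    funkNorm_smul (inv_nonneg.2 hr.le), inv_mul_lt_one₀ hr] at h

lemma funkNorm_le_iff (hop : IsOpen Ω) (hconv : Convex ℝ Ω) (hz : z ∈ Ω) {r : ℝ} (hr : 0 < r) :
    funkNorm Ω z v ≤ r ↔ z + r⁻¹ • v ∈ closure Ω := by
  have h := gauge_le_one_iff_mem_closure (hconv.translate_preimage_right z)
    (preimage_add_left_mem_nhds_zero hop hz) (x := r⁻¹ • v)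
  have hcl : closure ((z + ·) ⁻¹' Ω) = (z + ·) ⁻¹' closure Ω :=
    ((Homeomorph.addLeft z).preimage_closure Ω).symm
  rwa [hcl, ← funkNorm, funkNorm_smul (inv_nonneg.2 hr.le), inv_mul_le_one₀ hr] at h

lemma funkNorm_pos (hbd : Bornology.IsBounded Ω) (hop : IsOpen Ω) (hz : z ∈ Ω) (hv : v ≠ 0) :
    0 < funkNorm Ω z v :=
  (gauge_pos (absorbent_nhds_zero (preimage_add_left_mem_nhds_zero hop hz))
    ((NormedSpace.isVonNBounded_iff ℝ).2
      ((IsometryEquiv.addLeft z).isometry.antilipschitz.isBounded_preimage hbd))).2 hv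

lemma div_sub_le_funkNorm (hop : IsOpen Ω) (hconv : Convex ℝ Ω) (hz : z ∈ Ω)
    {f : E →L[ℝ] ℝ} {c : ℝ} (hf : ∀ w ∈ Ω, f w < c) (v : E) :
    f v / (c - f z) ≤ funkNorm Ω z v := by
  refine le_of_forall_gt_imp_ge_of_dense fun r hr => ?_
  have hr0 : 0 < r := (funkNorm_nonneg Ω z v).trans_lt hr
  have hmem := hf _ ((funkNorm_lt_iff hop hconv hz hr0).1 hr)
  rw [map_add, map_smul, smul_eq_mul, ← lt_sub_iff_add_lt', inv_mul_lt_iff₀ hr0] at hmem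
  rw [div_le_iff₀ (sub_pos.2 (hf z hz))]
  exact hmem.le

lemma continuousAt_funkNorm (hop : IsOpen Ω) (hconv : Convex ℝ Ω) (hz : z ∈ Ω) :
    ContinuousAt (fun p : E × E => funkNorm Ω p.1 p.2) (z, v) := by
  have hΩ : ∀ᶠ p : E × E in 𝓝 (z, v), p.1 ∈ Ω := continuousAt_fst.eventually_mem (hop.mem_nhds hz)
  have hray : ∀ r : ℝ, Continuous fun p : E × E => p.1 + r • p.2 := fun r => by fun_prop
  refine tendsto_order.2 ⟨fun r hr => ?_, fun r hr => ?_⟩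
  · rcases lt_or_ge r 0 with hr0 | hr0
    · exact Eventually.of_forall fun p => hr0.trans_le (funkNorm_nonneg Ω p.1 p.2)
    obtain ⟨r', hrr', hr'⟩ := exists_between hr
    have hr'0 : 0 < r' := hr0.trans_lt hrr'
    have hout : z + r'⁻¹ • v ∈ (closure Ω)ᶜ := by
      rwa [mem_compl_iff, ← funkNorm_le_iff hop hconv hz hr'0, not_le]
    filter_upwards [(hray _).continuousAt.eventually_mem
      (isClosed_closure.isOpen_compl.mem_nhds hout), hΩ] with p hp hp1
    rw [mem_compl_iff, ← funkNorm_le_iff hop hconv hp1 hr'0, not_le] at hp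
    exact hrr'.trans hp
  · have hr0 : 0 < r := (funkNorm_nonneg Ω z v).trans_lt hr
    have hin : z + r⁻¹ • v ∈ Ω := (funkNorm_lt_iff hop hconv hz hr0).1 hr
    filter_upwards [(hray _).continuousAt.eventually_mem (hop.mem_nhds hin), hΩ] with p hp hp1
    exact (funkNorm_lt_iff hop hconv hp1 hr0).2 hp

lemma continuousOn_funkNorm (hop : IsOpen Ω) (hconv : Convex ℝ Ω) :
    ContinuousOn (fun p : E × E => funkNorm Ω p.1 p.2) (Ω ×ˢ univ) :=
  fun _ hp => (continuousAt_funkNorm hop hconv hp.1).continuousWithinAt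

end Funk

section Calculus

lemma lt_csSup_of_mem_isOpen {U I : Set ℝ} (hU : IsOpen U) (hUI : U ⊆ I) (hI : BddAbove I)
    {t : ℝ} (ht : t ∈ U) : t < sSup I := by
  obtain ⟨u, htu, hu⟩ := Filter.Eventually.exists_gt (hU.mem_nhds ht)
  exact htu.trans_le (le_csSup hI (hUI hu))

lemma csInf_lt_of_mem_isOpen {U I : Set ℝ} (hU : IsOpen U) (hUI : U ⊆ I) (hI : BddBelow I)
    {t : ℝ} (ht : t ∈ U) : sInf I < t := by
  obtain ⟨u, hut, hu⟩ := Filter.Eventually.exists_lt (hU.mem_nhds ht)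
  exact (csInf_le hI (hUI hu)).trans_lt hut

lemma intervalIntegrable_inv_sub {s : ℝ} (hs : s ∉ Icc 0 1) :
    IntervalIntegrable (fun t => (s - t)⁻¹) volume 0 1 :=
  intervalIntegral.intervalIntegrable_inv
    (fun t ht => sub_ne_zero.2 fun h => hs (h ▸ by rwa [uIcc_of_le zero_le_one] at ht))
    (by fun_prop)

lemma integral_inv_sub {s : ℝ} (hs : s ∉ Icc 0 1) :
    ∫ t in (0 : ℝ)..1, (s - t)⁻¹ = Real.log (s / (s - 1)) := by
  rw [intervalIntegral.integral_comp_sub_left (fun t => t⁻¹), sub_zero, integral_inv]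
  rw [uIcc_of_le (by linarith)]
  exact fun h => hs ⟨by linarith [h.2], by linarith [h.1]⟩

variable {E : Type*} [NormedAddCommGroup E] [NormedSpace ℝ E]

lemma HasDerivWithinAt.log_sub_apply {γ : ℝ → E} {γ' : E} {s : Set ℝ} {t c : ℝ}
    (hγ : HasDerivWithinAt γ γ' s t) (f : E →L[ℝ] ℝ) (hc : f (γ t) < c) :
    HasDerivWithinAt (fun u => Real.log (c - f (γ u))) (-(f γ' / (c - f (γ t)))) s t := by
  simpa only [Function.comp_apply, neg_div] using
    ((f.hasFDerivAt.comp_hasDerivWithinAt t hγ).const_sub c).log (sub_pos.2 hc).ne'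

lemma log_sub_apply_sub_log_sub_apply (f : E →L[ℝ] ℝ) {x y : E} {s : ℝ}
    (hx : f x < f (x + s • (y - x))) (hy : f y < f (x + s • (y - x))) :
    Real.log (f (x + s • (y - x)) - f x) - Real.log (f (x + s • (y - x)) - f y) =
      Real.log (s / (s - 1)) := by
  have hcx : f (x + s • (y - x)) - f x = s * f (y - x) := by simp
  have hcy : f (x + s • (y - x)) - f y = (s - 1) * f (y - x) := by
    simp only [map_add, map_smul, map_sub, smul_eq_mul]
    ring
  rw [← Real.log_div (sub_pos.2 hx).ne' (sub_pos.2 hy).ne', hcx, hcy,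
    mul_div_mul_right _ _ (right_ne_zero_of_mul (hcx ▸ (sub_pos.2 hx).ne'))]

end Calculus

section HilbertGeometry

variable {n : ℕ} {Ω : Set (EuclideanSpace ℝ (Fin n))} {x y z v : EuclideanSpace ℝ (Fin n)}

section FinslerNorm

lemma rayParam_nonneg (Ω : Set (EuclideanSpace ℝ (Fin n))) (z v : EuclideanSpace ℝ (Fin n)) :
    0 ≤ rayParam Ω z v :=
  Real.sSup_nonneg fun _ ht => ht.1

lemma finslerNorm_eq_of_ne_zero (hv : v ≠ 0) :
    finslerNorm Ω z v = ((rayParam Ω z v)⁻¹ + (rayParam Ω z (-v))⁻¹) / 2 := by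
  have hdist : ∀ w, dist z (z + rayParam Ω z w • w) = rayParam Ω z w * ‖w‖ := fun w => by
    rw [dist_self_add_right, norm_smul, Real.norm_of_nonneg (rayParam_nonneg Ω z w)]
  have hv' : ‖v‖ ≠ 0 := norm_ne_zero_iff.2 hv
  simp only [finslerNorm, if_neg hv, hdist, norm_neg]
  field_simp
  ring

lemma finslerNorm_nonneg (Ω : Set (EuclideanSpace ℝ (Fin n))) (z v : EuclideanSpace ℝ (Fin n)) :
    0 ≤ finslerNorm Ω z v := by
  by_cases hv : v = 0
  · simp [finslerNorm, hv]
  · have := rayParam_nonneg Ω z v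
    have := rayParam_nonneg Ω z (-v)
    rw [finslerNorm_eq_of_ne_zero hv]
    positivity

lemma rayParam_eq_inv_funkNorm (hbd : Bornology.IsBounded Ω) (hop : IsOpen Ω)
    (hconv : Convex ℝ Ω) (hz : z ∈ Ω) (hv : v ≠ 0) :
    rayParam Ω z v = (funkNorm Ω z v)⁻¹ := by
  have hF := funkNorm_pos hbd hop hz hv
  have hset : {t : ℝ | 0 ≤ t ∧ z + t • v ∈ closure Ω} = Icc 0 (funkNorm Ω z v)⁻¹ := by
    ext t
    refine and_congr_right fun ht => ?_
    rcases ht.eq_or_lt with rfl | ht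
    · simp [subset_closure hz, hF.le]
    · rw [le_inv_comm₀ ht hF, funkNorm_le_iff hop hconv hz (inv_pos.2 ht), inv_inv]
  rw [rayParam, hset, csSup_Icc (inv_nonneg.2 hF.le)]

lemma finslerNorm_eq_funkNorm (hbd : Bornology.IsBounded Ω) (hop : IsOpen Ω)
    (hconv : Convex ℝ Ω) (hz : z ∈ Ω) (v : EuclideanSpace ℝ (Fin n)) :
    finslerNorm Ω z v = (funkNorm Ω z v + funkNorm Ω z (-v)) / 2 := by
  by_cases hv : v = 0
  · simp [finslerNorm, hv, funkNorm, gauge_zero]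
  · rw [finslerNorm_eq_of_ne_zero hv, rayParam_eq_inv_funkNorm hbd hop hconv hz hv,
      rayParam_eq_inv_funkNorm hbd hop hconv hz (neg_ne_zero.2 hv), inv_inv, inv_inv]

lemma continuousOn_finslerNorm_comp {α : Type*} [TopologicalSpace α] {s : Set α}
    {γ γ' : α → EuclideanSpace ℝ (Fin n)} (hbd : Bornology.IsBounded Ω) (hop : IsOpen Ω)
    (hconv : Convex ℝ Ω) (hγ : ContinuousOn γ s) (hγ' : ContinuousOn γ' s) (hmem : MapsTo γ s Ω) :
    ContinuousOn (fun t => finslerNorm Ω (γ t) (γ' t)) s := by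
  have hF := continuousOn_funkNorm hop hconv
  refine (((hF.comp (hγ.prodMk hγ') fun t ht => ⟨hmem ht, mem_univ _⟩).add
    (hF.comp (hγ.prodMk hγ'.neg) fun t ht => ⟨hmem ht, mem_univ _⟩)).div_const 2).congr
    fun t ht => finslerNorm_eq_funkNorm hbd hop hconv (hmem ht) _

lemma div_sub_div_le_finslerNorm (hbd : Bornology.IsBounded Ω) (hop : IsOpen Ω)
    (hconv : Convex ℝ Ω) (hz : z ∈ Ω) {f g : EuclideanSpace ℝ (Fin n) →L[ℝ] ℝ} {c d : ℝ}
    (hf : ∀ w ∈ Ω, f w < c) (hg : ∀ w ∈ Ω, g w < d) (v : EuclideanSpace ℝ (Fin n)) :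
    (f v / (c - f z) - g v / (d - g z)) / 2 ≤ finslerNorm Ω z v := by
  have hfv := div_sub_le_funkNorm hop hconv hz hf v
  have hgv := div_sub_le_funkNorm hop hconv hz hg (-v)
  rw [map_neg, neg_div] at hgv
  rw [finslerNorm_eq_funkNorm hbd hop hconv hz]
  linarith

end FinslerNorm

section Chord

lemma isCompact_chordParams (hbd : Bornology.IsBounded Ω) (hxy : x ≠ y) :
    IsCompact (chordParams Ω x y) :=
  (isClosedEmbedding_smul_left (sub_ne_zero.2 hxy.symm)).isCompact_preimage
    ((Homeomorph.addLeft x).isCompact_preimage.2 hbd.isCompact_closure)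

lemma sInf_chordParams_lt (hbd : Bornology.IsBounded Ω) (hop : IsOpen Ω) (hxy : x ≠ y)
    {t : ℝ} (ht : x + t • (y - x) ∈ Ω) : sInf (chordParams Ω x y) < t :=
  csInf_lt_of_mem_isOpen (U := (fun s : ℝ => x + s • (y - x)) ⁻¹' Ω) (I := chordParams Ω x y)
    (hop.preimage (by fun_prop)) (fun _ hs => subset_closure hs)
    (isCompact_chordParams hbd hxy).bddBelow ht

lemma lt_sSup_chordParams (hbd : Bornology.IsBounded Ω) (hop : IsOpen Ω) (hxy : x ≠ y)
    {t : ℝ} (ht : x + t • (y - x) ∈ Ω) : t < sSup (chordParams Ω x y) :=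
  lt_csSup_of_mem_isOpen (U := (fun s : ℝ => x + s • (y - x)) ⁻¹' Ω) (I := chordParams Ω x y)
    (hop.preimage (by fun_prop)) (fun _ hs => subset_closure hs)
    (isCompact_chordParams hbd hxy).bddAbove ht

lemma hilbertDist_eq_log_sub_log (hxy : x ≠ y) (ha : sInf (chordParams Ω x y) < 0)
    (hb : 1 < sSup (chordParams Ω x y)) :
    hilbertDist Ω x y = (Real.log (sSup (chordParams Ω x y) / (sSup (chordParams Ω x y) - 1))
      - Real.log (sInf (chordParams Ω x y) / (sInf (chordParams Ω x y) - 1))) / 2 := by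
  have hline : ∀ c : ℝ, x + c • (y - x) = AffineMap.lineMap x y c := fun c => by
    rw [AffineMap.lineMap_apply_module', add_comm]
  have hd : dist x y ≠ 0 := dist_ne_zero.2 hxy
  simp only [hilbertDist, if_neg hxy, hline, dist_lineMap_left, dist_lineMap_right,
    Real.norm_eq_abs]
  set a := sInf (chordParams Ω x y)
  set b := sSup (chordParams Ω x y)
  have ha1 : a - 1 ≠ 0 := by linarith
  have hb1 : b - 1 ≠ 0 := by linarith
  rw [abs_of_neg ha, abs_of_pos (by linarith : (0 : ℝ) < b),
    abs_of_pos (by linarith : (0 : ℝ) < 1 - a), abs_of_neg (by linarith : 1 - b < 0), neg_sub,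
    ← Real.log_div (div_ne_zero (by linarith) hb1) (div_ne_zero ha.ne ha1), mul_comm,
    ← div_eq_mul_one_div]
  congr 2
  field_simp
  ring

lemma rayParam_add_smul_sub (hbd : Bornology.IsBounded Ω) (hx : x ∈ Ω) (hxy : x ≠ y) {t : ℝ}
    (ht : t ≤ sSup (chordParams Ω x y)) :
    rayParam Ω (x + t • (y - x)) (y - x) = sSup (chordParams Ω x y) - t := by
  have hI := isCompact_chordParams hbd hxy
  have hne : (chordParams Ω x y).Nonempty := ⟨0, by simpa [chordParams] using subset_closure hx⟩
  refine IsGreatest.csSup_eq ⟨⟨sub_nonneg.2 ht, ?_⟩, fun s hs => ?_⟩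
  · rw [add_assoc, ← add_smul, add_sub_cancel]
    exact hI.sSup_mem hne
  · have hts : t + s ∈ chordParams Ω x y := by
      show x + (t + s) • (y - x) ∈ closure Ω
      rw [add_smul, ← add_assoc]
      exact hs.2
    linarith [le_csSup hI.bddAbove hts]

lemma rayParam_add_smul_neg_sub (hbd : Bornology.IsBounded Ω) (hx : x ∈ Ω) (hxy : x ≠ y) {t : ℝ}
    (ht : sInf (chordParams Ω x y) ≤ t) :
    rayParam Ω (x + t • (y - x)) (-(y - x)) = t - sInf (chordParams Ω x y) := by
  have hI := isCompact_chordParams hbd hxy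
  have hne : (chordParams Ω x y).Nonempty := ⟨0, by simpa [chordParams] using subset_closure hx⟩
  have hline : ∀ s : ℝ, x + t • (y - x) + s • -(y - x) = x + (t - s) • (y - x) := fun s => by
    rw [smul_neg, sub_smul]
    abel
  refine IsGreatest.csSup_eq ⟨⟨sub_nonneg.2 ht, ?_⟩, fun s hs => ?_⟩
  · rw [hline, sub_sub_cancel]
    exact hI.sInf_mem hne
  · have hts : t - s ∈ chordParams Ω x y := by
      show x + (t - s) • (y - x) ∈ closure Ω
      rw [← hline]
      exact hs.2
    linarith [csInf_le hI.bddBelow hts]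

lemma finslerNorm_add_smul_sub (hbd : Bornology.IsBounded Ω) (hx : x ∈ Ω) (hxy : x ≠ y) {t : ℝ}
    (ht : t ∈ Icc (sInf (chordParams Ω x y)) (sSup (chordParams Ω x y))) :
    finslerNorm Ω (x + t • (y - x)) (y - x) =
      ((sSup (chordParams Ω x y) - t)⁻¹ - (sInf (chordParams Ω x y) - t)⁻¹) / 2 := by
  rw [finslerNorm_eq_of_ne_zero (sub_ne_zero.2 hxy.symm), rayParam_add_smul_sub hbd hx hxy ht.2,
    rayParam_add_smul_neg_sub hbd hx hxy ht.1, ← neg_sub (sInf (chordParams Ω x y)) t,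
    inv_neg, ← sub_eq_add_neg]

end Chord

section Length

lemma integral_finslerNorm_segment (hbd : Bornology.IsBounded Ω) (hop : IsOpen Ω)
    (hx : x ∈ Ω) (hy : y ∈ Ω) :
    ∫ t in (0 : ℝ)..1, finslerNorm Ω (x + t • (y - x))
      (derivWithin (fun t : ℝ => x + t • (y - x)) (Icc 0 1) t) = hilbertDist Ω x y := by
  have hderiv : EqOn (derivWithin (fun t : ℝ => x + t • (y - x)) (Icc 0 1)) (fun _ => y - x)
      (Icc 0 1) := fun t ht => by
    have h := ((hasDerivAt_id t).smul_const (y - x)).const_add x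
    rw [one_smul] at h
    exact h.hasDerivWithinAt.derivWithin (uniqueDiffOn_Icc zero_lt_one t ht)
  rw [intervalIntegral.integral_congr (g := fun t => finslerNorm Ω (x + t • (y - x)) (y - x))
    fun t ht => by rw [uIcc_of_le zero_le_one] at ht; simp only [hderiv ht]]
  rcases eq_or_ne x y with rfl | hxy
  · simp [finslerNorm, hilbertDist]
  set a := sInf (chordParams Ω x y)
  set b := sSup (chordParams Ω x y)
  have ha : a < 0 := sInf_chordParams_lt hbd hop hxy (by simpa using hx)
  have hb : 1 < b := lt_sSup_chordParams hbd hop hxy (by simpa using hy)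
  have ha' : a ∉ Icc 0 1 := fun h => (h.1.trans_lt ha).false
  have hb' : b ∉ Icc 0 1 := fun h => (h.2.trans_lt hb).false
  rw [intervalIntegral.integral_congr (g := fun t => ((b - t)⁻¹ - (a - t)⁻¹) / 2)
      fun t ht => finslerNorm_add_smul_sub hbd hx hxy ?_,
    intervalIntegral.integral_div, intervalIntegral.integral_sub (intervalIntegrable_inv_sub hb')
      (intervalIntegrable_inv_sub ha'), integral_inv_sub hb', integral_inv_sub ha',
    hilbertDist_eq_log_sub_log hxy ha hb]
  rw [uIcc_of_le zero_le_one] at ht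
  exact ⟨by linarith [ht.1], by linarith [ht.2]⟩

lemma hilbertDist_le_integral_finslerNorm (hbd : Bornology.IsBounded Ω) (hop : IsOpen Ω)
    (hconv : Convex ℝ Ω) {γ : ℝ → EuclideanSpace ℝ (Fin n)} (hγ : ContDiffOn ℝ 1 γ (Icc 0 1))
    (h0 : γ 0 = x) (h1 : γ 1 = y) (hmem : ∀ t ∈ Icc (0 : ℝ) 1, γ t ∈ Ω) :
    hilbertDist Ω x y ≤ ∫ t in (0 : ℝ)..1, finslerNorm Ω (γ t) (derivWithin γ (Icc 0 1) t) := by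
  set γ' := derivWithin γ (Icc (0 : ℝ) 1)
  have hx : x ∈ Ω := h0 ▸ hmem 0 ⟨le_rfl, zero_le_one⟩
  have hy : y ∈ Ω := h1 ▸ hmem 1 ⟨zero_le_one, le_rfl⟩
  rcases eq_or_ne x y with rfl | hxy
  · rw [hilbertDist, if_pos rfl]
    exact intervalIntegral.integral_nonneg zero_le_one fun t _ => finslerNorm_nonneg Ω _ _
  have ha := sInf_chordParams_lt hbd hop hxy (t := 0) (by simpa using hx)
  have hb := lt_sSup_chordParams hbd hop hxy (t := 1) (by simpa using hy)
  set p := x + sInf (chordParams Ω x y) • (y - x)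
  set q := x + sSup (chordParams Ω x y) • (y - x)
  obtain ⟨f, hf⟩ := geometric_hahn_banach_open_point (x := q) hconv hop
    fun h => (lt_sSup_chordParams hbd hop hxy h).false
  obtain ⟨g, hg⟩ := geometric_hahn_banach_open_point (x := p) hconv hop
    fun h => (sInf_chordParams_lt hbd hop hxy h).false
  have hγd : ∀ t ∈ Icc (0 : ℝ) 1, HasDerivWithinAt γ (γ' t) (Icc 0 1) t :=
    fun t ht => (hγ.differentiableOn one_ne_zero t ht).hasDerivWithinAt
  have hΦ : ∀ t ∈ Icc (0 : ℝ) 1, HasDerivWithinAt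
      (fun u => (Real.log (g p - g (γ u)) - Real.log (f q - f (γ u))) / 2)
      ((-(g (γ' t) / (g p - g (γ t))) - -(f (γ' t) / (f q - f (γ t)))) / 2) (Icc 0 1) t :=
    fun t ht => (((hγd t ht).log_sub_apply g (hg _ (hmem t ht))).sub
      ((hγd t ht).log_sub_apply f (hf _ (hmem t ht)))).div_const 2
  have hint : IntegrableOn (fun t => finslerNorm Ω (γ t) (γ' t)) (Icc 0 1) :=
    (continuousOn_finslerNorm_comp hbd hop hconv hγ.continuousOn
      (hγ.continuousOn_derivWithin (uniqueDiffOn_Icc zero_lt_one) le_rfl) hmem).integrableOn_Icc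
  have hle := intervalIntegral.sub_le_integral_of_hasDeriv_right_of_le zero_le_one
    (fun t ht => (hΦ t ht).continuousWithinAt)
    (fun t ht => ((hΦ t (Ioo_subset_Icc_self ht)).hasDerivAt
      (Icc_mem_nhds ht.1 ht.2)).hasDerivWithinAt) hint
    fun t ht => by
      have := div_sub_div_le_finslerNorm hbd hop hconv (hmem t (Ioo_subset_Icc_self ht)) hf hg
        (γ' t)
      linarith
  refine le_of_eq_of_le ?_ hle
  rw [h0, h1, hilbertDist_eq_log_sub_log hxy ha hb,
    ← log_sub_apply_sub_log_sub_apply f (hf x hx) (hf y hy),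
    ← log_sub_apply_sub_log_sub_apply g (hg x hx) (hg y hy)]
  ring

end Length

end HilbertGeometry

theorem hilbertDist_eq_finsler_length_general {n : ℕ}
    (Ω : Set (EuclideanSpace ℝ (Fin n)))
    (hbd : Bornology.IsBounded Ω) (hop : IsOpen Ω) (hconv : Convex ℝ Ω)
    (x y : EuclideanSpace ℝ (Fin n)) (hx : x ∈ Ω) (hy : y ∈ Ω) :
    hilbertDist Ω x y =
      sInf {L : ℝ | ∃ γ : ℝ → EuclideanSpace ℝ (Fin n),
        ContDiffOn ℝ 1 γ (Set.Icc (0 : ℝ) 1) ∧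
        γ 0 = x ∧ γ 1 = y ∧
        (∀ t ∈ Set.Icc (0 : ℝ) 1, γ t ∈ Ω) ∧
        L = ∫ t in (0 : ℝ)..1, finslerNorm Ω (γ t) (derivWithin γ (Set.Icc (0 : ℝ) 1) t)} := by
  symm
  refine IsLeast.csInf_eq ⟨⟨fun t => x + t • (y - x), by fun_prop, by simp, by simp,
    fun t ht => ?_, (integral_finslerNorm_segment hbd hop hx hy).symm⟩, ?_⟩
  · convert hconv hx hy (sub_nonneg.2 ht.2) ht.1 (sub_add_cancel 1 t) using 1
    module
  · rintro L ⟨γ, hγ, h0, h1, hmem, rfl⟩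
    exact hilbertDist_le_integral_finslerNorm hbd hop hconv hγ h0 h1 hmem

/-- The length metric of the Hilbert–Finsler norm is the Hilbert
metric: `d_Ω(x,y)` is the infimum of the Finsler lengths of `C¹` paths in `Ω`
joining `x` to `y`. -/
theorem hilbertDist_eq_finsler_length {n : ℕ} (hn : 1 ≤ n)
    (Ω : Set (EuclideanSpace ℝ (Fin n)))
    (hbd : Bornology.IsBounded Ω) (hop : IsOpen Ω) (hconv : Convex ℝ Ω)
    (x y : EuclideanSpace ℝ (Fin n)) (hx : x ∈ Ω) (hy : y ∈ Ω) :
    hilbertDist Ω x y =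
      sInf {L : ℝ | ∃ γ : ℝ → EuclideanSpace ℝ (Fin n),
        ContDiffOn ℝ 1 γ (Set.Icc (0 : ℝ) 1) ∧
        γ 0 = x ∧ γ 1 = y ∧
        (∀ t ∈ Set.Icc (0 : ℝ) 1, γ t ∈ Ω) ∧
        L = ∫ t in (0 : ℝ)..1, finslerNorm Ω (γ t) (derivWithin γ (Set.Icc (0 : ℝ) 1) t)} :=
  hilbertDist_eq_finsler_length_general Ω hbd hop hconv x y hx hy

end
end
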